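/- Discarding m qubits lowers −ln A_3 by at most m·ln 2: let ρ be an (n+m)-qubit state and let tr_m(ρ) denote the n-qubit state obtained by tracing out the last m qubits. Then A_3(tr_m(ρ)) ≤ 2^m · A_3(ρ), equivalently −ln A_3(tr_m(ρ)) ≥ −ln A_3(ρ) − m·ln 2. -/

import Mathlib

open Matrix Complex BigOperators
open scoped ComplexOrder

noncomputable section

/-- Index type for `n` qubits: functions `Fin n → Fin 2` (cardinality `2^n`). -/
abbrev QIdx (n : ℕ) := Fin n → Fin 2

/-- The four single-qubit Pauli matrices: `σ⁰ = I`, `σ¹ = σˣ`, `σ² = σᶻ`, `σ³ = σʸ`. -/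
def pauliMat : Fin 4 → Matrix (Fin 2) (Fin 2) ℂ
  | 0 => 1
  | 1 => !![0, 1; 1, 0]
  | 2 => !![1, 0; 0, -1]
  | 3 => !![0, -Complex.I; Complex.I, 0]

/-- The Pauli string `σ^{a_1} ⊗ ⋯ ⊗ σ^{a_n}` as a `2^n × 2^n` matrix. -/
def pauliString {n : ℕ} (a : Fin n → Fin 4) : Matrix (QIdx n) (QIdx n) ℂ :=
  fun i j => ∏ k, pauliMat (a k) (i k) (j k)

/-- An `n`-qubit state: positive semidefinite with unit trace. -/
def IsState {n : ℕ} (ρ : Matrix (QIdx n) (QIdx n) ℂ) : Prop :=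
  ρ.PosSemidef ∧ ρ.trace = 1

/-- The `α`-moment of the Pauli spectrum `A_α(ρ) = 2^{-n} ∑_P |tr(ρP)|^{2α}`. -/
def Amom {n : ℕ} (α : ℝ) (ρ : Matrix (QIdx n) (QIdx n) ℂ) : ℝ :=
  ((2:ℝ)^n)⁻¹ * ∑ a : Fin n → Fin 4, (‖(ρ * pauliString a).trace‖) ^ (2 * α)

/-- The 2-Rényi entropy `S₂(ρ) = -ln tr(ρ²)`. -/
def S2 {n : ℕ} (ρ : Matrix (QIdx n) (QIdx n) ℂ) : ℝ :=
  - Real.log ((ρ * ρ).trace.re)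

/-- The magic witness `W_α(ρ) = (1/(1-α)) ln A_α(ρ) - ((1-2α)/(1-α)) S₂(ρ)`. -/
def Wit {n : ℕ} (α : ℝ) (ρ : Matrix (QIdx n) (QIdx n) ℂ) : ℝ :=
  (1 / (1 - α)) * Real.log (Amom α ρ) - ((1 - 2*α)/(1 - α)) * S2 ρ

/-- The stabilizer norm `D(ρ) = A_{1/2}(ρ) = 2^{-n} ∑_P |tr(ρP)|`. -/
def Dnorm {n : ℕ} (ρ : Matrix (QIdx n) (QIdx n) ℂ) : ℝ :=
  Amom (1/2) ρ

/-- A Clifford unitary: unitary mapping every Pauli string to `±` a Pauli string. -/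
def IsCliffordUnitary {n : ℕ} (U : Matrix (QIdx n) (QIdx n) ℂ) : Prop :=
  U ∈ Matrix.unitaryGroup (QIdx n) ℂ ∧
    ∀ a : Fin n → Fin 4, ∃ (b : Fin n → Fin 4) (ε : ℝ),
      (ε = 1 ∨ ε = -1) ∧ U * pauliString a * Uᴴ = (ε : ℂ) • pauliString b

/-- The computational all-zeros basis vector `|0⟩^{⊗n}`. -/
def zeroVec (n : ℕ) : QIdx n → ℂ :=
  fun i => if (∀ k, i k = 0) then 1 else 0

/-- A pure stabilizer state vector: `U|0⟩^{⊗n}` for a Clifford unitary `U`. -/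
def IsPureStab {n : ℕ} (ψ : QIdx n → ℂ) : Prop :=
  ∃ U, IsCliffordUnitary U ∧ ψ = U.mulVec (zeroVec n)

/-- The rank-one projector `|ψ⟩⟨ψ|`. -/
def proj {n : ℕ} (ψ : QIdx n → ℂ) : Matrix (QIdx n) (QIdx n) ℂ :=
  Matrix.vecMulVec ψ (star ψ)

/-- A mixed stabilizer state: a finite convex combination of pure stabilizer projectors. -/
def IsMixedStab {n : ℕ} (ρ : Matrix (QIdx n) (QIdx n) ℂ) : Prop :=
  ∃ (k : ℕ) (p : Fin k → ℝ) (ψ : Fin k → QIdx n → ℂ),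
    (∀ i, 0 ≤ p i) ∧ (∑ i, p i = 1) ∧ (∀ i, IsPureStab (ψ i)) ∧
    ρ = ∑ i, (p i : ℂ) • proj (ψ i)

/-- The set of values `ln ∑ᵢ |xᵢ|` over finite real stabilizer decompositions of `ρ`. -/
def StabDecomps {n : ℕ} (ρ : Matrix (QIdx n) (QIdx n) ℂ) : Set ℝ :=
  { r | ∃ (k : ℕ) (x : Fin k → ℝ) (ψ : Fin k → QIdx n → ℂ),
      (∀ i, IsPureStab (ψ i)) ∧ ρ = ∑ i, (x i : ℂ) • proj (ψ i) ∧
      r = Real.log (∑ i, |x i|) }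

/-- The log-free robustness of magic. -/
def LR {n : ℕ} (ρ : Matrix (QIdx n) (QIdx n) ℂ) : ℝ := sInf (StabDecomps ρ)

open Classical in
/-- Positive-semidefinite square root (junk value `0` off the PSD cone). -/
def psdSqrt {n : ℕ} (A : Matrix (QIdx n) (QIdx n) ℂ) : Matrix (QIdx n) (QIdx n) ℂ :=
  if h : A.PosSemidef then
    h.1.eigenvectorUnitary.1 * diagonal ((↑) ∘ Real.sqrt ∘ h.1.eigenvalues) *
      (star h.1.eigenvectorUnitary : Matrix (QIdx n) (QIdx n) ℂ) else 0

/-- The Uhlmann fidelity `F(ρ,σ) = (tr √(√ρ σ √ρ))²`. -/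
def fidelity {n : ℕ} (ρ σ : Matrix (QIdx n) (QIdx n) ℂ) : ℝ :=
  ((psdSqrt (psdSqrt ρ * σ * psdSqrt ρ)).trace.re) ^ 2

/-- The stabilizer fidelity `D_F(ρ) = inf { -ln F(ρ,σ) : σ a mixed stabilizer state }`. -/
def DF {n : ℕ} (ρ : Matrix (QIdx n) (QIdx n) ℂ) : ℝ :=
  sInf { r | ∃ σ, IsMixedStab σ ∧ r = - Real.log (fidelity ρ σ) }

/-- Filtered Pauli moment `Ã_α(ρ) = (2^n A_α(ρ) - 1)/(2^n - 1)`. -/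
def Atil {n : ℕ} (α : ℝ) (ρ : Matrix (QIdx n) (QIdx n) ℂ) : ℝ :=
  ((2:ℝ)^n * Amom α ρ - 1) / ((2:ℝ)^n - 1)

/-- Filtered stabilizer norm `D̃(ρ) = (2^n D(ρ) - 1)/(2^n - 1)`. -/
def Dtil {n : ℕ} (ρ : Matrix (QIdx n) (QIdx n) ℂ) : ℝ :=
  ((2:ℝ)^n * Dnorm ρ - 1) / ((2:ℝ)^n - 1)

/-- Filtered magic witness `W̃_α(ρ) = (1/(1-α)) ln Ã_α(ρ) + ((1-2α)/(1-α)) ln Ã₁(ρ)`. -/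
def Wtil {n : ℕ} (α : ℝ) (ρ : Matrix (QIdx n) (QIdx n) ℂ) : ℝ :=
  (1/(1-α)) * Real.log (Atil α ρ) + ((1 - 2*α)/(1-α)) * Real.log (Atil 1 ρ)

/-- The maximally mixed state `I/2^n`. -/
def maxMixed (n : ℕ) : Matrix (QIdx n) (QIdx n) ℂ := ((2:ℂ)^n)⁻¹ • 1

/-- The single-qubit T-state vector `|T⟩ = (|0⟩ + e^{-iπ/4}|1⟩)/√2`. -/
def Tket : QIdx 1 → ℂ :=
  fun i => if i 0 = 0 then (Real.sqrt 2 : ℂ)⁻¹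
           else Complex.exp (-(Real.pi/4 : ℂ) * Complex.I) * (Real.sqrt 2 : ℂ)⁻¹

/-- The depolarized T-state `ρ_p = (1-p)|T⟩⟨T| + p·I₂/2`. -/
def rhoDep (p : ℝ) : Matrix (QIdx 1) (QIdx 1) ℂ :=
  ((1 - p : ℝ) : ℂ) • proj Tket + ((p : ℝ) : ℂ) • (((2:ℂ))⁻¹ • 1)


/-- Partial trace over the last `m` qubits of an `(n+m)`-qubit matrix. -/
def ptraceLast {n m : ℕ} (ρ : Matrix (QIdx (n+m)) (QIdx (n+m)) ℂ) :
    Matrix (QIdx n) (QIdx n) ℂ :=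
  fun i j => ∑ k : QIdx m,
    ρ (fun t => Fin.addCases (motive := fun _ => Fin 2) i k t)
      (fun t => Fin.addCases (motive := fun _ => Fin 2) j k t)


/-! The Pauli strings of the first `n` qubits are, through `P ↦ P ⊗ I`, exactly the Pauli strings
of all `n + m` qubits acting trivially on the last `m`, and `tr((tr_m ρ) P) = tr(ρ (P ⊗ I))`.
Hence `2ⁿ A_α(tr_m ρ)` is a subsum of the nonnegative sum `2ⁿ⁺ᵐ A_α(ρ)`, for every `α`. The
logarithmic form follows because a unit-trace matrix has `A_α > 0`: the identity string alone
contributes `1`. -/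

open scoped Kronecker

lemma ptraceLast_apply {n m : ℕ} (ρ : Matrix (QIdx (n+m)) (QIdx (n+m)) ℂ) (i j : QIdx n) :
    ptraceLast ρ i j = ∑ k : QIdx m, ρ (Fin.append i k) (Fin.append j k) :=
  rfl

lemma pauliString_zero {n : ℕ} : pauliString (0 : Fin n → Fin 4) = 1 := by
  ext i j
  simp only [pauliString, pauliMat, Matrix.one_apply, Finset.prod_boole,
    Finset.mem_univ, true_implies, funext_iff]

lemma pauliString_append {n m : ℕ} (a : Fin n → Fin 4) (b : Fin m → Fin 4) :
    pauliString (Fin.append a b) =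
      (pauliString a ⊗ₖ pauliString b).reindex (Fin.appendEquiv n m) (Fin.appendEquiv n m) := by
  ext I J
  simp [pauliString, Fin.prod_univ_add, Matrix.kroneckerMap_apply]

lemma trace_ptraceLast_mul {n m : ℕ} (ρ : Matrix (QIdx (n+m)) (QIdx (n+m)) ℂ)
    (Q : Matrix (QIdx n) (QIdx n) ℂ) :
    (ptraceLast ρ * Q).trace =
      (ρ * (Q ⊗ₖ (1 : Matrix (QIdx m) (QIdx m) ℂ)).reindex (Fin.appendEquiv n m)
        (Fin.appendEquiv n m)).trace := by
  have sum_split : ∀ f : QIdx (n+m) → ℂ,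
      ∑ I, f I = ∑ p : QIdx n × QIdx m, f (Fin.appendEquiv n m p) :=
    fun f => ((Fin.appendEquiv n m).sum_comp f).symm
  simp only [Matrix.trace, Matrix.diag, Matrix.mul_apply, Matrix.reindex_apply,
    Matrix.submatrix_apply, sum_split, Fintype.sum_prod_type, Equiv.symm_apply_apply,
    Matrix.kroneckerMap_apply, Matrix.one_apply, mul_ite, mul_one, mul_zero, Fintype.sum_ite_eq',
    ptraceLast_apply, Finset.sum_mul]
  exact Finset.sum_congr rfl fun i _ => Finset.sum_comm

lemma trace_ptraceLast_mul_pauliString {n m : ℕ} (ρ : Matrix (QIdx (n+m)) (QIdx (n+m)) ℂ)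
    (a : Fin n → Fin 4) :
    (ptraceLast ρ * pauliString a).trace = (ρ * pauliString (Fin.append a 0)).trace := by
  rw [pauliString_append, pauliString_zero, trace_ptraceLast_mul]

lemma trace_ptraceLast {n m : ℕ} (ρ : Matrix (QIdx (n+m)) (QIdx (n+m)) ℂ) :
    (ptraceLast ρ).trace = ρ.trace := by
  simpa using trace_ptraceLast_mul ρ 1

lemma Amom_pos_of_trace_eq_one {n : ℕ} (α : ℝ) {σ : Matrix (QIdx n) (QIdx n) ℂ}
    (hσ : σ.trace = 1) : 0 < Amom α σ := by
  have identity_term : ‖(σ * pauliString 0).trace‖ ^ (2 * α) = 1 := by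
    rw [pauliString_zero, Matrix.mul_one, hσ, norm_one, Real.one_rpow]
  have one_le_sum : 1 ≤ ∑ a : Fin n → Fin 4, ‖(σ * pauliString a).trace‖ ^ (2 * α) :=
    identity_term ▸ Finset.single_le_sum (f := fun a => ‖(σ * pauliString a).trace‖ ^ (2 * α))
      (fun a _ => by positivity) (Finset.mem_univ 0)
  exact mul_pos (by positivity) (one_le_sum.trans_lt' one_pos)

lemma Amom_ptraceLast_le {n m : ℕ} (α : ℝ) (ρ : Matrix (QIdx (n+m)) (QIdx (n+m)) ℂ) :
    Amom α (ptraceLast ρ) ≤ 2 ^ m * Amom α ρ := by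
  set f : (Fin (n+m) → Fin 4) → ℝ := fun b => ‖(ρ * pauliString b).trace‖ ^ (2 * α) with hf
  have restrict_le : ∑ a : Fin n → Fin 4, f (Fin.append a 0) ≤ ∑ b, f b := by
    rw [← (Fin.appendEquiv n m).sum_comp, Fintype.sum_prod_type]
    exact Finset.sum_le_sum fun a _ =>
      Finset.single_le_sum (f := fun c => f (Fin.appendEquiv n m (a, c)))
        (fun c _ => by positivity) (Finset.mem_univ 0)
  have scale : (2:ℝ) ^ m * ((2:ℝ) ^ (n+m))⁻¹ = ((2:ℝ) ^ n)⁻¹ := by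
    rw [pow_add]; field_simp
  calc Amom α (ptraceLast ρ) = ((2:ℝ) ^ n)⁻¹ * ∑ a, f (Fin.append a 0) := by
        simp only [Amom, trace_ptraceLast_mul_pauliString, hf]
    _ ≤ ((2:ℝ) ^ n)⁻¹ * ∑ b, f b := by gcongr
    _ = 2 ^ m * Amom α ρ := by rw [Amom, ← mul_assoc, scale]

/-- discarding `m` qubits lowers `-ln A₃` by at most `m ln 2`:
`A₃(tr_m ρ) ≤ 2^m A₃(ρ)`, equivalently
`-ln A₃(tr_m ρ) ≥ -ln A₃(ρ) - m ln 2`. -/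
theorem ptrace_A3_bound {n m : ℕ} (ρ : Matrix (QIdx (n+m)) (QIdx (n+m)) ℂ)
    (hρ : IsState ρ) :
    Amom 3 (ptraceLast ρ) ≤ (2:ℝ)^m * Amom 3 ρ ∧
    - Real.log (Amom 3 (ptraceLast ρ)) ≥ - Real.log (Amom 3 ρ) - m * Real.log 2 := by
  have bound := Amom_ptraceLast_le 3 ρ
  have hpos : 0 < Amom 3 ρ := Amom_pos_of_trace_eq_one 3 hρ.2
  have hpos_ptrace : 0 < Amom 3 (ptraceLast ρ) :=
    Amom_pos_of_trace_eq_one 3 (by rw [trace_ptraceLast, hρ.2])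
  refine ⟨bound, ?_⟩
  have log_bound := Real.log_le_log hpos_ptrace bound
  rw [Real.log_mul (by positivity) hpos.ne', Real.log_pow] at log_bound
  linarith

end
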